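/- Let μ be an atomless Z^2-invariant ergodic Borel probability measure on X, and suppose μ(F) = 0, where F is the set of x in Y whose σ-component contains every point of the Z^2-orbit of x lying in Y. Then for μ-almost every x in Y, the set L(x) = {k in Z : T^k S^{-k} x ∈ Y and T^k S^{-k} x is not in the σ-component of x} contains both positive and negative elements; in particular the set K(x) = {k : T^k S^{-k} x in the σ-component of x} is finite for μ-almost all x in Y. -/

import Mathlib

/-!
Three facts hold for `μ`-a.e. `x ∈ Y`.

`x` is aperiodic. For a period `(k, l)` with `l > 0`, row `0` determines the configuration and
satisfies a nontrivial linear recurrence over `ZMod 2`, so each nonzero period has only finitely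
many periodic points in `X`, and these are null since `μ` is atomless.

`K(x)` is finite. For aperiodic `x`, `k ∈ K(x)` means that the path of sites followed by `σ` from
`(k, -k)` merges with the one from the origin. Paths never cross, so if `K(x)` were unbounded on
both sides, every path would be squeezed between merging ones and `x` would lie in `F`. If `K(x)`
were infinite but bounded on one side, its extreme element would be an equivariant choice of a
point in each infinite class of the measure-preserving shift `T S⁻¹`, which mass transport rules
out.

Poincaré recurrence for `T S⁻¹` and its inverse puts `1`s on the antidiagonal beyond both ends of
the finite set `K(x)`; those sites lie in `L(x)`.
-/

open MeasureTheory Filter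

/-- Configurations: `ℤ²`-indexed families of elements of `ℤ/2ℤ`. -/
abbrev Config := ℤ → ℤ → ZMod 2

/-- The three-dot relation. -/
def threeDot (x : Config) : Prop :=
  ∀ k l : ℤ, x k l + x (k + 1) l + x k (l + 1) = 0

/-- The three-dot system `X`. -/
def Xset : Set Config := {x | threeDot x}

/-- The `ℤ²`-shift action: `shift k l x = T^k S^l x`. -/
def shift (k l : ℤ) (x : Config) : Config := fun a b => x (a + k) (b + l)

/-- The shift `T`. -/
def Tm : Config → Config := shift 1 0

/-- The shift `S`. -/
def Sm : Config → Config := shift 0 1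

/-- `Y` : points of `X` with coordinate `1` at the origin. -/
def Yset : Set Config := {x | threeDot x ∧ x 0 0 = 1}

/-- The map `σ : Y → Y`, extended to all configurations:
it equals `Tx` if `Tx` has a `1` at the origin, and `Sx` otherwise. -/
def sig (x : Config) : Config := if x 1 0 = 1 then Tm x else Sm x

/-- `Z` : points of `Y` with σ-antecedents of every depth (equivalently,
infinitely many σ-antecedents). -/
def Zset : Set Config := {x | x ∈ Yset ∧ ∀ n : ℕ, ∃ y ∈ Yset, sig^[n] y = x}

/-- `Z₂` : points of `Z` having two distinct σ-preimages in `Z`. -/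
def Z2set : Set Config :=
  {x | x ∈ Zset ∧ ∃ y z, y ≠ z ∧ y ∈ Zset ∧ z ∈ Zset ∧ sig y = x ∧ sig z = x}

/-- The σ-component of a point `x` of `Y`: points of the `ℤ²`-orbit of `x`
lying in `Y` whose forward σ-trajectory meets that of `x`. -/
def sigComp (x : Config) : Set Config :=
  {y | (∃ k l : ℤ, y = shift k l x) ∧ y ∈ Yset ∧ ∃ p q : ℕ, sig^[p] x = sig^[q] y}

/-- Aperiodicity of a configuration for the `ℤ²`-action. -/
def Aperiodic (x : Config) : Prop := ∀ k l : ℤ, shift k l x = x → k = 0 ∧ l = 0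

/-- `F` : points of `Y` whose σ-component contains every point of their
`ℤ²`-orbit lying in `Y`. -/
def Fset : Set Config :=
  {x | x ∈ Yset ∧ ∀ k l : ℤ, shift k l x ∈ Yset → shift k l x ∈ sigComp x}

/-- `L(x)` : anti-diagonal positions in `Y` but not in the σ-component of `x`. -/
def Lset (x : Config) : Set ℤ :=
  {k | shift k (-k) x ∈ Yset ∧ shift k (-k) x ∉ sigComp x}

/-- `K(x)` : anti-diagonal positions in the σ-component of `x`. -/
def Kset (x : Config) : Set ℤ := {k | shift k (-k) x ∈ sigComp x}

section LinearRecurrence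

open Finset

variable {R : Type*} [Semiring R] [NoZeroDivisors R]

theorem eq_zero_of_sum_eq_zero_of_forall_ne {ι : Type*} {s : Finset ι} {c f : ι → R} {j : ι}
    (hj : j ∈ s) (hcj : c j ≠ 0) (hsum : ∑ i ∈ s, c i * f i = 0)
    (hf : ∀ i ∈ s, i ≠ j → c i ≠ 0 → f i = 0) : f j = 0 := by
  rw [sum_eq_single_of_mem j hj fun i hi hij => ?_] at hsum
  · exact (mul_eq_zero.1 hsum).resolve_left hcj
  · by_cases hci : c i = 0
    · rw [hci, zero_mul]
    · rw [hf i hi hij hci, mul_zero]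

theorem exists_window_of_linear_recurrence {c : ℕ → R} {n : ℕ} (hc : ∃ i < n, c i ≠ 0) :
    ∃ N : ℕ, ∀ r : ℤ → R, (∀ a : ℤ, ∑ i ∈ range n, c i * r (a + i) = 0) →
      (∀ j < N, r j = 0) → r = 0 := by
  classical
  set S := (range n).filter (c · ≠ 0)
  have hS : S.Nonempty := by
    obtain ⟨i, hi, hci⟩ := hc
    exact ⟨i, mem_filter.2 ⟨mem_range.2 hi, hci⟩⟩
  obtain ⟨hMS, hMc⟩ := mem_filter.1 (S.max'_mem hS)
  obtain ⟨hmS, hmc⟩ := mem_filter.1 (S.min'_mem hS)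
  have hbounds : ∀ i ∈ range n, c i ≠ 0 → S.min' hS ≤ i ∧ i ≤ S.max' hS := fun i hi hci =>
    ⟨S.min'_le i (mem_filter.2 ⟨hi, hci⟩), S.le_max' i (mem_filter.2 ⟨hi, hci⟩)⟩
  set m := S.min' hS
  set M := S.max' hS
  refine ⟨M - m, fun r hr hwin => ?_⟩
  -- Grow the zero window by one place on each side, solving the recurrence for its extreme term.
  have grow : ∀ t : ℕ, ∀ b : ℤ, -(t : ℤ) ≤ b → b < (M - m : ℕ) + t → r b = 0 := by
    intro t
    induction t with
    | zero =>
      intro b hb0 hbN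
      lift b to ℕ using hb0
      exact hwin b (by omega)
    | succ t ih =>
      intro b hb0 hbN
      by_cases hold : -(t : ℤ) ≤ b ∧ b < (M - m : ℕ) + t
      · exact ih b hold.1 hold.2
      rcases le_or_gt (-(t : ℤ)) b with hb | hb
      · simpa using eq_zero_of_sum_eq_zero_of_forall_ne (f := fun i : ℕ => r (b - M + i)) hMS hMc
          (hr (b - M)) fun i hi _ hci =>
            have := hbounds i hi hci
            ih _ (by omega) (by omega)
      · simpa using eq_zero_of_sum_eq_zero_of_forall_ne (f := fun i : ℕ => r (b - m + i)) hmS hmc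
          (hr (b - m)) fun i hi _ hci =>
            have := hbounds i hi hci
            ih _ (by omega) (by omega)
  funext b
  exact grow (b.natAbs + 1) b (by omega) (by omega)

end LinearRecurrence

section MassTransport

open Set

variable {α : Type*} [MeasurableSpace α] {μ : Measure α} [IsFiniteMeasure μ] {g : ℤ → α → α}
  {K : α → Set ℤ}

/-- Mass transport: send unit mass from each `x` whose `K x` is infinite and bounded below to
`g b x`, `b = min K x`. A receiving point `y` gets mass from `g (-n) y` for each of the infinitely
many `n ∈ K y`; as `g` preserves the finite measure `μ`, the receiving points form a null set. -/
theorem ae_finite_of_bddBelow (hg : ∀ b, MeasurePreserving (g b) μ μ)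
    (hg_add : ∀ a b x, g a (g b x) = g (a + b) x) (hg_zero : ∀ x, g 0 x = x)
    (hK : ∀ k, MeasurableSet {x | k ∈ K x})
    (hKg : ∀ x b, b ∈ K x → K (g b x) = (· + b) ⁻¹' K x) :
    ∀ᵐ x ∂μ, BddBelow (K x) → (K x).Finite := by
  have hKm : ∀ k, Measurable (k ∈ K ·) := fun k => measurableSet_setOfPred.1 (hK k)
  set E := {x | 0 ∈ K x ∧ (∀ k ∈ K x, 0 ≤ k) ∧ ∀ N, ∃ k ∈ K x, N < k}
  have hE : MeasurableSet E := measurableSet_setOfPred.2 (by fun_prop)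
  have hgE : ∀ x b, b ∈ K x → (g b x ∈ E ↔ (∀ k ∈ K x, b ≤ k) ∧ ¬BddAbove (K x)) := by
    intro x b hb
    rw [← (OrderIso.addRight b).bddAbove_preimage, not_bddAbove_iff]
    simp only [E, mem_ofPred_eq, hKg x b hb, mem_preimage, zero_add, hb, true_and,
      OrderIso.addRight_apply]
    refine and_congr_left' ⟨fun h k hk => ?_, fun h k hk => ?_⟩
    · have := h (k - b) (by simpa using hk)
      omega
    · have := h _ hk
      omega
  have hEnull : μ E = 0 := by
    set B : ℕ → Set α := fun n => g (-n) ⁻¹' (E ∩ {x | (n : ℤ) ∈ K x})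
    have hB : ∀ n x, x ∈ B n → -(n : ℤ) ∈ K x ∧ ∀ k ∈ K x, -(n : ℤ) ≤ k := by
      rintro n x ⟨⟨h0, hmin, -⟩, hn⟩
      have hK_eq := hKg _ _ hn
      rw [hg_add, add_neg_cancel, hg_zero] at hK_eq
      rw [hK_eq]
      refine ⟨by simpa using h0, fun k hk => ?_⟩
      have := hmin _ hk
      simp only at this
      omega
    have hdisj : Pairwise (Function.onFun Disjoint B) := fun m n hmn =>
      disjoint_left.2 fun x hm hn => hmn <| by
        obtain ⟨hm0, hm1⟩ := hB m x hm
        obtain ⟨hn0, hn1⟩ := hB n x hn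
        have := hm1 _ hn0
        have := hn1 _ hm0
        omega
    have hsum : ∑' n : ℕ, μ (E ∩ {x | (n : ℤ) ∈ K x}) ≠ ⊤ := by
      rw [← tsum_congr fun n : ℕ => (hg (-n)).measure_preimage (hE.inter (hK n)).nullMeasurableSet,
        ← measure_iUnion hdisj fun n => (hE.inter (hK n)).preimage (hg (-n)).measurable]
      exact measure_ne_top μ _
    refine measure_mono_null (fun x hx => ?_) (measure_limsup_atTop_eq_zero hsum)
    rw [mem_limsup_iff_frequently_mem, frequently_atTop]
    intro n
    obtain ⟨k, hk, hnk⟩ := hx.2.2 n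
    exact ⟨k.toNat, by omega, hx, by simpa [Int.toNat_of_nonneg (hx.2.1 k hk)] using hk⟩
  have hnull : μ (⋃ b, g b ⁻¹' E) = 0 :=
    measure_iUnion_null fun b => ((hg b).measure_preimage hE.nullMeasurableSet).trans hEnull
  filter_upwards [measure_eq_zero_iff_ae_notMem.1 hnull] with x hx hbdd
  by_contra hinf
  obtain ⟨b, hb, hmin⟩ := Int.exists_least_of_bdd (P := (· ∈ K x))
    (let ⟨b, hb⟩ := hbdd; ⟨b, fun _ => (hb ·)⟩) (Set.Infinite.nonempty hinf)
  exact hx (mem_iUnion.2 ⟨b, (hgE x b hb).2 ⟨hmin, fun h => hinf (hbdd.finite_of_bddAbove h)⟩⟩)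

theorem ae_finite_of_bddAbove (hg : ∀ b, MeasurePreserving (g b) μ μ)
    (hg_add : ∀ a b x, g a (g b x) = g (a + b) x) (hg_zero : ∀ x, g 0 x = x)
    (hK : ∀ k, MeasurableSet {x | k ∈ K x})
    (hKg : ∀ x b, b ∈ K x → K (g b x) = (· + b) ⁻¹' K x) :
    ∀ᵐ x ∂μ, BddAbove (K x) → (K x).Finite := by
  have := ae_finite_of_bddBelow (μ := μ) (g := fun b => g (-b)) (K := fun x => -K x)
    (fun b => hg (-b)) (fun a b x => by rw [hg_add, neg_add]) (fun x => by rw [neg_zero, hg_zero])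
    (fun k => by simpa [Set.mem_neg] using hK (-k))
    (fun x b hb => by ext k; simp [Set.mem_neg, hKg x (-b) hb, add_comm])
  filter_upwards [this] with x hx hbdd
  simpa using hx (bddBelow_neg.2 hbdd)

end MassTransport

theorem exists_iterate_eq_trans {α : Type*} {f : α → α} {u v w : α}
    (huv : ∃ p q : ℕ, f^[p] u = f^[q] v) (hvw : ∃ p q : ℕ, f^[p] v = f^[q] w) :
    ∃ p q : ℕ, f^[p] u = f^[q] w := by
  obtain ⟨p, q, h⟩ := huv
  obtain ⟨p', q', h'⟩ := hvw
  refine ⟨p' + p, q + q', ?_⟩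
  rw [Function.iterate_add_apply, h, ← Function.iterate_add_apply, Nat.add_comm p' q,
    Function.iterate_add_apply, h', ← Function.iterate_add_apply]

theorem MeasureTheory.MeasurePreserving.of_leftInverse {α : Type*} [MeasurableSpace α]
    {μ : Measure α} {f g : α → α} (hf : MeasurePreserving f μ μ) (hg : Measurable g)
    (hgf : Function.LeftInverse g f) : MeasurePreserving g μ μ :=
  ⟨hg, by rw [← hf.map_eq, Measure.map_map hg hf.measurable, hgf.comp_eq_id, Measure.map_id,
    hf.map_eq]⟩

theorem shift_shift (k l k' l' : ℤ) (x : Config) :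
    shift k l (shift k' l' x) = shift (k + k') (l + l') x := by
  funext a b
  simp only [shift]
  ring_nf

@[simp]
theorem shift_zero : shift 0 0 = id := by
  funext x a b
  simp [shift]

theorem iterate_shift (k l : ℤ) (n : ℕ) : (shift k l)^[n] = shift (n * k) (n * l) := by
  induction n with
  | zero => funext x; simp
  | succ n ih =>
    funext x
    rw [Function.iterate_succ_apply', ih, shift_shift]
    push_cast
    ring_nf

theorem threeDot_shift {x : Config} (hx : threeDot x) (k l : ℤ) : threeDot (shift k l x) := by
  intro a b
  simpa only [shift, add_right_comm _ (1 : ℤ)] using hx (a + k) (b + l)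

theorem threeDot_swap {x : Config} (hx : threeDot x) : threeDot (Function.swap x) := by
  intro a b
  simpa only [Function.swap, add_right_comm] using hx b a

theorem shift_mem_Yset_iff {x : Config} (hx : threeDot x) (k l : ℤ) :
    shift k l x ∈ Yset ↔ x k l = 1 := by
  simp [Yset, threeDot_shift hx k l, shift]

theorem measurableSet_Xset : MeasurableSet Xset :=
  measurableSet_setOfPred.2 (by unfold threeDot; fun_prop)

theorem measurableSet_Yset : MeasurableSet Yset :=
  measurableSet_setOfPred.2 (by unfold threeDot; fun_prop)

theorem measurable_shift (k l : ℤ) : Measurable (shift k l) := by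
  unfold shift
  fun_prop

theorem measurable_sig : Measurable sig :=
  Measurable.ite (measurableSet_setOfPred.2 (by fun_prop)) (measurable_shift 1 0)
    (measurable_shift 0 1)

theorem measurePreserving_shift {μ : Measure Config} (hT : MeasurePreserving Tm μ μ)
    (hS : MeasurePreserving Sm μ μ) (k l : ℤ) : MeasurePreserving (shift k l) μ μ := by
  have hadd : ∀ {a b c d : ℤ}, MeasurePreserving (shift a b) μ μ →
      MeasurePreserving (shift c d) μ μ → MeasurePreserving (shift (a + c) (b + d)) μ μ :=
    fun h h' => by simpa only [Function.comp_def, shift_shift] using h.comp h'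
  have hneg : ∀ {a b : ℤ}, MeasurePreserving (shift a b) μ μ →
      MeasurePreserving (shift (-a) (-b)) μ μ := fun h =>
    h.of_leftInverse (measurable_shift _ _) fun x => by simp [shift_shift]
  have hmul : ∀ {a b : ℤ}, MeasurePreserving (shift a b) μ μ →
      ∀ n : ℤ, MeasurePreserving (shift (n * a) (n * b)) μ μ := by
    intro a b h n
    induction n using Int.induction_on with
    | zero => simpa using MeasurePreserving.id μ
    | succ n ih => simpa [add_mul] using hadd ih h
    | pred n ih => convert hadd ih (hneg h) using 2 <;> ring
  simpa using hadd (hmul hT k) (hmul hS l)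

theorem ae_frequently_antidiagonal_eq_one {μ : Measure Config} [IsFiniteMeasure μ]
    (hT : MeasurePreserving Tm μ μ) (hS : MeasurePreserving Sm μ μ) (d : ℤ) :
    ∀ᵐ x ∂μ, x 0 0 = 1 → ∃ᶠ n : ℕ in atTop, x (n * d) (-(n * d)) = 1 := by
  have hs : MeasurableSet {x : Config | x 0 0 = 1} := measurableSet_setOfPred.2 (by fun_prop)
  have hR := (measurePreserving_shift hT hS d (-d)).conservative
  filter_upwards [hR.ae_mem_imp_frequently_image_mem hs.nullMeasurableSet] with x hx h00
  simpa [iterate_shift, shift] using hx h00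

section Periodic

open Finset

theorem threeDot.fwdDiff_column {x : Config} (hx : threeDot x) (a : ℤ) :
    fwdDiff 1 (x a) = x (a + 1) := by
  funext b
  have two : (2 : ZMod 2) = 0 := rfl
  simp only [fwdDiff]
  linear_combination hx a b - (x a b + x (a + 1) b) * two

theorem threeDot.iterate_fwdDiff_column {x : Config} (hx : threeDot x) (a : ℤ) (i : ℕ) :
    (fwdDiff 1)^[i] (x a) = x (a + i) := by
  induction i generalizing a with
  | zero => simp
  | succ i ih =>
    rw [Function.iterate_succ_apply, hx.fwdDiff_column, ih]
    push_cast
    ring_nf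

theorem threeDot.apply_add_nat {x : Config} (hx : threeDot x) (a b : ℤ) (n : ℕ) :
    x a (b + n) = ∑ i ∈ range (n + 1), (n.choose i : ZMod 2) * x (a + i) b := by
  simpa [hx.iterate_fwdDiff_column, nsmul_eq_mul] using shift_eq_sum_fwdDiff_iter 1 (x a) n b

/-- With `p = k⁺` and `q = k⁻`, row `0` of a `(k, L)`-periodic configuration satisfies
`r (a + q) = ∑ j ≤ L, (L choose j) r (a + p + j)`; these are the coefficients of that recurrence. -/
def rowCoeff (k : ℤ) (L i : ℕ) : ZMod 2 :=
  (if k.toNat ≤ i then (L.choose (i - k.toNat) : ZMod 2) else 0) + if i = (-k).toNat then 1 else 0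

theorem sum_rowCoeff_mul (k : ℤ) (L : ℕ) (r : ℤ → ZMod 2) (a : ℤ) :
    ∑ i ∈ range (k.natAbs + L + 1), rowCoeff k L i * r (a + i) =
      ∑ j ∈ range (L + 1), (L.choose j : ZMod 2) * r (a + k.toNat + j) + r (a + (-k).toNat) := by
  have hlen : k.natAbs + L + 1 = k.toNat + (L + 1 + (-k).toNat) := by omega
  simp only [rowCoeff, add_mul, sum_add_distrib, ite_mul, zero_mul, one_mul]
  rw [sum_ite_eq', if_pos (mem_range.2 (by omega)), hlen, sum_range_add, sum_range_add,
    sum_eq_zero fun i hi => if_neg (by rw [mem_range] at hi; omega)]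
  simp [Nat.choose_eq_zero_of_lt, add_assoc]

theorem exists_rowCoeff_ne_zero (k : ℤ) {L : ℕ} (hL : 0 < L) :
    ∃ i < k.natAbs + L + 1, rowCoeff k L i ≠ 0 := by
  by_cases hq : k.toNat + L = (-k).toNat
  · refine ⟨k.toNat, by omega, ?_⟩
    simp [rowCoeff, show k.toNat ≠ (-k).toNat by omega]
  · refine ⟨k.toNat + L, by omega, ?_⟩
    simp [rowCoeff, hq]

theorem sum_rowCoeff_mul_row_eq_zero {x : Config} (hx : threeDot x) {k : ℤ} {L : ℕ}
    (hper : shift k L x = x) (a : ℤ) :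
    ∑ i ∈ range (k.natAbs + L + 1), rowCoeff k L i * x (a + i) 0 = 0 := by
  have hrow : x (a + k.toNat) (0 + L) = x (a + (-k).toNat) 0 := by
    rw [← congrFun (congrFun hper (a + (-k).toNat)) 0]
    simp only [shift]
    congr 1
    omega
  rw [sum_rowCoeff_mul k L (fun i => x i 0), ← hx.apply_add_nat, hrow, CharTwo.add_self_eq_zero]

theorem eq_of_row_zero_eq {x y : Config} (hx : threeDot x) (hy : threeDot y) {k : ℤ} {L : ℕ}
    (hL : 0 < L) (hxp : shift k L x = x) (hyp : shift k L y = y) (hrow : ∀ a, x a 0 = y a 0) :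
    x = y := by
  funext a b
  set t := (-b).toNat
  have ht : (t : ℤ) ≤ t * L := le_mul_of_one_le_right (by positivity) (by exact_mod_cast hL)
  obtain ⟨n, hn⟩ : ∃ n : ℕ, b + t * L = n := ⟨(b + t * L).toNat, by omega⟩
  have hper : ∀ z : Config, shift k L z = z → z a b = z (a + t * k) (0 + n) := fun z hz => by
    rw [← congrFun (congrFun (Function.IsFixedPt.iterate hz t) a) b, iterate_shift, ← hn,
      zero_add]
    rfl
  rw [hper x hxp, hper y hyp, hx.apply_add_nat, hy.apply_add_nat]
  simp only [hrow]

theorem finite_fixedPoints_shift_of_pos (k : ℤ) {L : ℕ} (hL : 0 < L) :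
    (Xset ∩ Function.fixedPoints (shift k L)).Finite := by
  obtain ⟨N, hN⟩ := exists_window_of_linear_recurrence (exists_rowCoeff_ne_zero k hL)
  refine (Set.toFinite ((fun x : Config => fun j : Fin N => x j 0) '' _)).of_finite_image ?_
  rintro x ⟨hx, hxp⟩ y ⟨hy, hyp⟩ hxy
  refine eq_of_row_zero_eq hx hy hL hxp hyp fun a => sub_eq_zero.1 <|
    congrFun (hN (fun a => x a 0 - y a 0) (fun a => ?_) fun j hj => ?_) a
  · simp only [mul_sub, sum_sub_distrib, sum_rowCoeff_mul_row_eq_zero hx hxp,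
      sum_rowCoeff_mul_row_eq_zero hy hyp, sub_zero]
  · simpa [sub_eq_zero] using congrFun hxy ⟨j, hj⟩

end Periodic

theorem fixedPoints_shift_neg (k l : ℤ) :
    Function.fixedPoints (shift (-k) (-l)) = Function.fixedPoints (shift k l) := by
  have key : ∀ {k l : ℤ} {x : Config}, shift k l x = x → shift (-k) (-l) x = x := fun h => by
    conv_lhs => rw [← h]
    simp [shift_shift]
  ext x
  exact ⟨fun h => (by simpa using key h : shift k l x = x), key⟩

/-- Horizontal periods become vertical ones under the symmetry `Function.swap` of the
three-dot relation. -/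
theorem finite_fixedPoints_shift {k l : ℤ} (h : (k, l) ≠ 0) :
    (Xset ∩ Function.fixedPoints (shift k l)).Finite := by
  have hvert : ∀ k {l : ℤ}, l ≠ 0 → (Xset ∩ Function.fixedPoints (shift k l)).Finite := by
    intro k l hl
    rcases hl.lt_or_gt with hl | hl
    · lift -l to ℕ using (neg_pos.2 hl).le with L hL
      rw [← fixedPoints_shift_neg, ← hL]
      exact finite_fixedPoints_shift_of_pos (-k) (by omega)
    · lift l to ℕ using hl.le with L
      exact finite_fixedPoints_shift_of_pos k (by omega)
  by_cases hl : l = 0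
  · subst hl
    have hk : k ≠ 0 := by simpa using h
    refine ((hvert 0 hk).preimage (f := fun x : Config => Function.swap x)
      fun x _ y _ hxy => ?_).subset fun x ⟨hx, hxp⟩ => ?_
    · funext a b
      exact congrFun (congrFun hxy b) a
    · refine ⟨threeDot_swap hx, funext fun a => funext fun b => ?_⟩
      exact congrFun (congrFun hxp b) a
  · exact hvert k hl

theorem ae_aperiodic {μ : Measure Config} [IsProbabilityMeasure μ] (hX : μ Xset = 1)
    (hatomless : ∀ c : Config, μ {c} = 0) : ∀ᵐ x ∂μ, Aperiodic x := by
  have : NullSingletonClass μ := ⟨hatomless⟩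
  have hXae : ∀ᵐ x ∂μ, x ∈ Xset := by
    rw [ae_mem_iff_measure_eq measurableSet_Xset.nullMeasurableSet, hX, measure_univ]
  have hper : ∀ p : ℤ × ℤ, ∀ᵐ x ∂μ, p ≠ 0 → x ∉ Xset ∩ Function.fixedPoints (shift p.1 p.2) := by
    intro p
    by_cases hp : p = 0
    · exact ae_of_all _ fun _ h => (h hp).elim
    · exact (measure_eq_zero_iff_ae_notMem.1
        ((finite_fixedPoints_shift hp).countable.measure_zero μ)).mono fun _ hx _ => hx
  filter_upwards [hXae, ae_all_iff.2 hper] with x hx hper k l hkl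
  by_contra hne
  exact hper (k, l) (by simpa [Prod.ext_iff] using hne) ⟨hx, hkl⟩

theorem Aperiodic.shift_inj {x : Config} (hx : Aperiodic x) {a b c d : ℤ}
    (h : shift a b x = shift c d x) : a = c ∧ b = d := by
  have := hx (a - c) (b - d) (by
    simpa [shift_shift, sub_eq_neg_add] using congrArg (shift (-c) (-d)) h)
  omega

def sigSite (x : Config) (p : ℤ × ℤ) : ℤ × ℤ :=
  if x (p.1 + 1) p.2 = 1 then (p.1 + 1, p.2) else (p.1, p.2 + 1)

section SigSite

variable {x : Config}

theorem sig_shift (x : Config) (p : ℤ × ℤ) :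
    sig (shift p.1 p.2 x) = shift (sigSite x p).1 (sigSite x p).2 x := by
  have h10 : shift p.1 p.2 x 1 0 = x (p.1 + 1) p.2 := by simp [shift, add_comm]
  unfold sig sigSite Tm Sm
  split_ifs <;> simp_all [shift_shift, add_comm]

theorem iterate_sig_shift (x : Config) (p : ℤ × ℤ) (t : ℕ) :
    sig^[t] (shift p.1 p.2 x) = shift ((sigSite x)^[t] p).1 ((sigSite x)^[t] p).2 x := by
  induction t with
  | zero => rfl
  | succ t ih => rw [Function.iterate_succ_apply', Function.iterate_succ_apply', ih, sig_shift]

theorem iterate_sig_self (x : Config) (t : ℕ) :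
    sig^[t] x = shift ((sigSite x)^[t] (0, 0)).1 ((sigSite x)^[t] (0, 0)).2 x := by
  simpa using iterate_sig_shift x (0, 0) t

theorem sigSite_eq_or (x : Config) (p : ℤ × ℤ) :
    sigSite x p = (p.1 + 1, p.2) ∨ sigSite x p = (p.1, p.2 + 1) := by
  unfold sigSite
  split_ifs <;> simp

theorem iterate_sigSite_level (x : Config) (p : ℤ × ℤ) (t : ℕ) :
    ((sigSite x)^[t] p).1 + ((sigSite x)^[t] p).2 = p.1 + p.2 + t := by
  induction t with
  | zero => simp
  | succ t ih =>
    rw [Function.iterate_succ_apply']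
    rcases sigSite_eq_or x ((sigSite x)^[t] p) with h | h <;> rw [h] <;> push_cast <;> omega

theorem iterate_sigSite_fst_mem (x : Config) (p : ℤ × ℤ) (t : ℕ) :
    p.1 ≤ ((sigSite x)^[t] p).1 ∧ ((sigSite x)^[t] p).1 ≤ p.1 + t := by
  induction t with
  | zero => simp
  | succ t ih =>
    rw [Function.iterate_succ_apply']
    rcases sigSite_eq_or x ((sigSite x)^[t] p) with h | h <;> rw [h] <;> push_cast <;> omega

theorem iterate_sigSite_fst_mono {p q : ℤ × ℤ} (hlevel : p.1 + p.2 = q.1 + q.2)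
    (hpq : p.1 ≤ q.1) (t : ℕ) : ((sigSite x)^[t] p).1 ≤ ((sigSite x)^[t] q).1 := by
  induction t with
  | zero => exact hpq
  | succ t ih =>
    have hp := iterate_sigSite_level x p t
    have hq := iterate_sigSite_level x q t
    rw [Function.iterate_succ_apply', Function.iterate_succ_apply']
    rcases ih.lt_or_eq with hlt | heq
    · rcases sigSite_eq_or x ((sigSite x)^[t] p) with h | h <;>
        rcases sigSite_eq_or x ((sigSite x)^[t] q) with h' | h' <;> rw [h, h'] <;> omega
    · rw [Prod.ext heq (by omega)]

theorem iterate_sigSite_eq_of_le {p q : ℤ × ℤ} {t s : ℕ}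
    (h : (sigSite x)^[t] p = (sigSite x)^[t] q) (hts : t ≤ s) :
    (sigSite x)^[s] p = (sigSite x)^[s] q := by
  obtain ⟨d, rfl⟩ := Nat.exists_eq_add_of_le hts
  rw [Nat.add_comm, Function.iterate_add_apply, Function.iterate_add_apply, h]

theorem iterate_sigSite_eq_of_between {p q r : ℤ × ℤ} (hpq : p.1 + p.2 = q.1 + q.2)
    (hqr : q.1 + q.2 = r.1 + r.2) (hp : p.1 ≤ q.1) (hr : q.1 ≤ r.1) {t : ℕ}
    (h : (sigSite x)^[t] p = (sigSite x)^[t] r) :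
    (sigSite x)^[t] q = (sigSite x)^[t] p := by
  have h1 := iterate_sigSite_fst_mono (x := x) hpq hp t
  have h2 := iterate_sigSite_fst_mono (x := x) hqr hr t
  have lp := iterate_sigSite_level x p t
  have lq := iterate_sigSite_level x q t
  rw [h] at h1 lp ⊢
  exact Prod.ext (by omega) (by omega)

end SigSite

theorem mem_Kset_iff {x : Config} {k : ℤ} :
    k ∈ Kset x ↔ shift k (-k) x ∈ Yset ∧ ∃ p q : ℕ, sig^[p] x = sig^[q] (shift k (-k) x) :=
  ⟨fun ⟨_, hY, h⟩ => ⟨hY, h⟩, fun ⟨hY, h⟩ => ⟨⟨k, -k, rfl⟩, hY, h⟩⟩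

theorem Kset_shift {x : Config} {b : ℤ} (hb : b ∈ Kset x) :
    Kset (shift b (-b) x) = (· + b) ⁻¹' Kset x := by
  obtain ⟨-, p, q, hbx⟩ := mem_Kset_iff.1 hb
  ext k
  simp only [Set.mem_preimage, mem_Kset_iff, shift_shift, ← neg_add]
  exact and_congr_right fun _ =>
    ⟨exists_iterate_eq_trans ⟨p, q, hbx⟩, exists_iterate_eq_trans ⟨q, p, hbx.symm⟩⟩

theorem measurableSet_mem_Kset (k : ℤ) : MeasurableSet {x | k ∈ Kset x} := by
  simp only [mem_Kset_iff, Set.ofPred_and]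
  refine (measurableSet_Yset.preimage (measurable_shift k (-k))).inter
    (measurableSet_setOfPred.2 (Measurable.exists fun p => Measurable.exists fun q =>
      measurableSet_setOfPred.1 (measurableSet_eq_fun (measurable_sig.iterate p)
        ((measurable_sig.iterate q).comp (measurable_shift k (-k))))))

/-- Aperiodicity turns the meeting of two `σ`-trajectories into the meeting of their paths of
sites, after equally many steps since both paths start on level `0`. -/
theorem Aperiodic.exists_iterate_sigSite_eq {x : Config} (hx : Aperiodic x) {k : ℤ}
    (hk : k ∈ Kset x) : ∃ t : ℕ, (sigSite x)^[t] (k, -k) = (sigSite x)^[t] (0, 0) := by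
  obtain ⟨-, p, q, h⟩ := mem_Kset_iff.1 hk
  rw [iterate_sig_self, iterate_sig_shift x (k, -k)] at h
  obtain ⟨h1, h2⟩ := hx.shift_inj h
  have lp := iterate_sigSite_level x (0, 0) p
  have lq := iterate_sigSite_level x (k, -k) q
  obtain rfl : p = q := by simp only at lp lq; omega
  exact ⟨p, (Prod.ext h1 h2).symm⟩

/-- Paths of sites do not cross, so the path from any site is squeezed between the paths from
antidiagonal sites of `K x` far to its left and far to its right, which merge with the path from
the origin. -/
theorem mem_Fset_of_not_bddAbove_of_not_bddBelow {x : Config} (hY : x ∈ Yset)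
    (hx : Aperiodic x) (hab : ¬BddAbove (Kset x)) (hbe : ¬BddBelow (Kset x)) : x ∈ Fset := by
  have hmerge : ∀ q : ℤ × ℤ, 0 ≤ q.1 + q.2 →
      ∃ T : ℕ, (sigSite x)^[T] q = (sigSite x)^[T + (q.1 + q.2).toNat] (0, 0) := by
    intro q hq
    set n := (q.1 + q.2).toNat
    obtain ⟨k₁, hk₁, hk₁q⟩ := not_bddBelow_iff.1 hbe (q.1 - n)
    obtain ⟨k₂, hk₂, hk₂q⟩ := not_bddAbove_iff.1 hab q.1
    obtain ⟨t₁, ht₁⟩ := hx.exists_iterate_sigSite_eq hk₁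
    obtain ⟨t₂, ht₂⟩ := hx.exists_iterate_sigSite_eq hk₂
    set T := max t₁ t₂
    have e₁ : (sigSite x)^[T] ((sigSite x)^[n] (k₁, -k₁)) = (sigSite x)^[T + n] (0, 0) := by
      rw [← Function.iterate_add_apply]
      exact iterate_sigSite_eq_of_le ht₁ (by omega)
    have e₂ : (sigSite x)^[T] ((sigSite x)^[n] (k₂, -k₂)) = (sigSite x)^[T + n] (0, 0) := by
      rw [← Function.iterate_add_apply]
      exact iterate_sigSite_eq_of_le ht₂ (by omega)
    have l₁ := iterate_sigSite_level x (k₁, -k₁) n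
    have l₂ := iterate_sigSite_level x (k₂, -k₂) n
    have f₁ := iterate_sigSite_fst_mem x (k₁, -k₁) n
    have f₂ := iterate_sigSite_fst_mem x (k₂, -k₂) n
    simp only at l₁ l₂ f₁ f₂
    exact ⟨T, (iterate_sigSite_eq_of_between (by omega) (by omega) (by omega) (by omega)
      (e₁.trans e₂.symm)).trans e₁⟩
  refine ⟨hY, fun k l hkl => ⟨⟨k, l, rfl⟩, hkl, ?_⟩⟩
  set m := (-(k + l)).toNat
  have hlevel := iterate_sigSite_level x (k, l) m
  simp only at hlevel
  obtain ⟨T, hT⟩ := hmerge ((sigSite x)^[m] (k, l)) (by omega)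
  refine ⟨T + (((sigSite x)^[m] (k, l)).1 + ((sigSite x)^[m] (k, l)).2).toNat, T + m, ?_⟩
  rw [iterate_sig_self, ← hT, ← Function.iterate_add_apply]
  exact (iterate_sig_shift x (k, l) (T + m)).symm

theorem ae_Kset_finite_or_unbounded {μ : Measure Config} [IsFiniteMeasure μ]
    (hT : MeasurePreserving Tm μ μ) (hS : MeasurePreserving Sm μ μ) :
    ∀ᵐ x ∂μ, (Kset x).Finite ∨ ¬BddAbove (Kset x) ∧ ¬BddBelow (Kset x) := by
  have hg b := measurePreserving_shift hT hS b (-b)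
  have hg_add a b (x : Config) : shift a (-a) (shift b (-b) x) = shift (a + b) (-(a + b)) x := by
    rw [shift_shift, neg_add]
  have hg_zero (x : Config) : shift 0 (-0) x = x := by simp
  filter_upwards [ae_finite_of_bddBelow (g := fun b => shift b (-b)) hg hg_add hg_zero
      measurableSet_mem_Kset fun _ _ => Kset_shift,
    ae_finite_of_bddAbove (g := fun b => shift b (-b)) hg hg_add hg_zero measurableSet_mem_Kset
      fun _ _ => Kset_shift] with x hbelow habove
  tauto

theorem mem_Lset_of_notMem_Kset {x : Config} (hx : threeDot x) {k : ℤ} (h1 : x k (-k) = 1)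
    (hk : k ∉ Kset x) : k ∈ Lset x :=
  ⟨(shift_mem_Yset_iff hx k (-k)).2 h1, hk⟩

theorem exists_mem_Lset_of_frequently {x : Config} (hx : threeDot x) (hK : (Kset x).Finite)
    {d : ℤ} (hd : d ≠ 0) (h : ∃ᶠ n : ℕ in atTop, x (n * d) (-(n * d)) = 1) :
    ∃ n : ℕ, 0 < n ∧ n * d ∈ Lset x := by
  have hK' : ∀ᶠ n : ℕ in atTop, (n * d : ℤ) ∉ Kset x := by
    rw [← Nat.cofinite_eq_atTop, eventually_cofinite]
    simp only [not_not]
    exact hK.preimage fun m _ n _ hmn => by simpa [hd] using hmn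
  obtain ⟨n, h1, hnK, hn⟩ := (h.and_eventually (hK'.and (eventually_gt_atTop 0))).exists
  exact ⟨n, hn, mem_Lset_of_notMem_Kset hx h1 hnK⟩

theorem stmt19_general (μ : Measure Config) [IsProbabilityMeasure μ]
    (hX : μ Xset = 1)
    (hT : MeasurePreserving Tm μ μ) (hS : MeasurePreserving Sm μ μ)
    (hatomless : ∀ c : Config, μ {c} = 0)
    (hF : μ Fset = 0) :
    ∀ᵐ x ∂μ, x ∈ Yset →
      (∃ k ∈ Lset x, 0 < k) ∧ (∃ k ∈ Lset x, k < 0) ∧ (Kset x).Finite := by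
  filter_upwards [ae_aperiodic hX hatomless, measure_eq_zero_iff_ae_notMem.1 hF,
    ae_Kset_finite_or_unbounded hT hS, ae_frequently_antidiagonal_eq_one hT hS 1,
    ae_frequently_antidiagonal_eq_one hT hS (-1)] with x hap hxF hK hright hleft hY
  have hfin : (Kset x).Finite := hK.resolve_right fun ⟨hab, hbe⟩ =>
    hxF (mem_Fset_of_not_bddAbove_of_not_bddBelow hY hap hab hbe)
  obtain ⟨n, hn, hnL⟩ := exists_mem_Lset_of_frequently hY.1 hfin one_ne_zero (hright hY.2)
  obtain ⟨n', hn', hn'L⟩ := exists_mem_Lset_of_frequently hY.1 hfin (by norm_num) (hleft hY.2)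
  exact ⟨⟨_, hnL, by omega⟩, ⟨_, hn'L, by omega⟩, hfin⟩

/-- If `μ(F) = 0`, then for `μ`-a.e. `x ∈ Y` the set `L(x)` contains both
positive and negative elements; in particular `K(x)` is finite a.e. -/
theorem stmt19 (μ : Measure Config) [IsProbabilityMeasure μ]
    (hX : μ Xset = 1)
    (hT : MeasurePreserving Tm μ μ) (hS : MeasurePreserving Sm μ μ)
    (hatomless : ∀ c : Config, μ {c} = 0)
    (herg : ∀ A : Set Config, MeasurableSet A → Tm ⁻¹' A = A → Sm ⁻¹' A = A →
      μ A = 0 ∨ μ A = 1)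
    (hF : μ Fset = 0) :
    ∀ᵐ x ∂μ, x ∈ Yset →
      (∃ k ∈ Lset x, 0 < k) ∧ (∃ k ∈ Lset x, k < 0) ∧ (Kset x).Finite :=
  stmt19_general μ hX hT hS hatomless hF
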